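/- Let q be a prime power and let f ∈ F_q[T][X] be primitive, irreducible as a polynomial in X over F_q(T), and not a constant multiple of X − u for any u ∈ F_q^×. If f splits completely over F_q((T)), then the number of distinct roots β of f in F_q((T)) with ord(β) = 0 is at most (q−1)·deg_T f. (Equivalently: if α ∉ F_q^× is totally T-adic of degree d and ℓ of its conjugates have T-adic valuation zero, then h(α) ≥ ℓ/(d(q−1)).) -/

import Mathlib

open Polynomial

/-- The `T`-degree of `f ∈ F[T][X]`: the maximal `T`-degree of its coefficients
(the variable of the inner polynomial ring plays the role of `T`). -/
noncomputable def degT {F : Type*} [Field F] (f : Polynomial (Polynomial F)) : ℕ :=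
  f.support.sup fun i => (f.coeff i).natDegree

/-- View `f ∈ F[T][X]` as a polynomial in `X` over the rational function field `F(T)`. -/
noncomputable def toRat {F : Type*} [Field F] (f : Polynomial (Polynomial F)) :
    Polynomial (RatFunc F) :=
  f.map (algebraMap (Polynomial F) (RatFunc F))

/-- `f ∈ F[T][X]` splits completely (into linear factors) over the
Laurent series field `F((T))`. -/
def SplitsCompletely {F : Type*} [Field F] (f : Polynomial (Polynomial F)) : Prop :=
  Polynomial.Splits (f.map (algebraMap (Polynomial F) (LaurentSeries F)))

/-!
Fix `u ∈ F^×`. A root `β` of valuation zero with constant term `u` lies in `F⟦T⟧`, and since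
`F⟦T⟧` is a domain, the distinct such roots `β₁, …, βₖ` give a factor `∏ (X - βᵢ)` of `f` over
`F⟦T⟧`. Evaluating at `X = u` shows that `∏ (u - βᵢ)`, hence `T^k`, divides `f(u) ∈ F[T]`. By
irreducibility `f(u) ≠ 0` (otherwise `f` is a multiple of `X - u`), so `k ≤ deg f(u) ≤ deg_T f`.
Summing over the `q - 1` possible constant terms gives the bound.
-/

theorem Polynomial.prod_sub_dvd_eval {R : Type*} [CommRing R] [IsDomain R] (p : R[X])
    {s : Finset R} (hs : ∀ a ∈ s, p.IsRoot a) (w : R) : ∏ a ∈ s, (w - a) ∣ p.eval w := by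
  rcases eq_or_ne p 0 with rfl | hp
  · simp
  have hle : s.val ≤ p.roots :=
    (Multiset.le_iff_subset s.nodup).2 fun a ha => (mem_roots hp).2 (hs a ha)
  have hdvd : ∏ a ∈ s, (X - C a) ∣ p :=
    (Multiset.prod_X_sub_C_dvd_iff_le_roots hp s.val).2 hle
  simpa [eval_prod] using eval_dvd (x := w) hdvd

theorem Polynomial.X_pow_dvd_of_X_pow_dvd_coe {R : Type*} [CommSemiring R] {p : R[X]} {n : ℕ}
    (h : PowerSeries.X ^ n ∣ (p : PowerSeries R)) : X ^ n ∣ p := by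
  rw [X_pow_dvd_iff]
  intro d hd
  simpa using PowerSeries.X_pow_dvd_iff.mp h d hd

section

variable {F : Type*} [Field F]

theorem natDegree_coeff_le_degT (f : F[X][X]) (i : ℕ) : (f.coeff i).natDegree ≤ degT f := by
  by_cases h : i ∈ f.support
  · exact Finset.le_sup (f := fun i => (f.coeff i).natDegree) h
  · simp [notMem_support_iff.mp h]

theorem natDegree_eval_C_le_degT (f : F[X][X]) (u : F) :
    (f.eval (C u)).natDegree ≤ degT f := by
  rw [eval_eq_sum_range]
  refine natDegree_sum_le_of_forall_le _ _ fun i _ => ?_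
  calc (f.coeff i * C u ^ i).natDegree ≤ (f.coeff i).natDegree := by
        simpa using natDegree_mul_le (p := f.coeff i) (q := C u ^ i)
    _ ≤ degT f := natDegree_coeff_le_degT f i

theorem eval_C_ne_zero_of_irreducible_toRat {f : F[X][X]} (hirr : Irreducible (toRat f))
    {u : F} (hXu : ∀ c : F[X], f ≠ C c * (X - C (C u))) : f.eval (C u) ≠ 0 := by
  intro h
  obtain ⟨g, hg⟩ := dvd_iff_isRoot.mpr h
  have hfactor : toRat f = (X - C (algebraMap F[X] (RatFunc F) (C u))) * toRat g := by
    simp only [toRat, hg, Polynomial.map_mul, Polynomial.map_sub, map_X, map_C]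
  have hg_unit : IsUnit (toRat g) :=
    (hirr.isUnit_or_isUnit hfactor).resolve_left (not_isUnit_X_sub_C _)
  have hg_deg : g.natDegree = 0 := by
    simpa [toRat, natDegree_map_eq_of_injective (IsFractionRing.injective F[X] (RatFunc F))]
      using natDegree_eq_zero_of_isUnit hg_unit
  obtain ⟨c, rfl⟩ := natDegree_eq_zero.mp hg_deg
  exact hXu c (by rw [hg, mul_comm])

theorem card_roots_constantCoeff_eq_le (f : F[X][X]) {u : F} (hu : f.eval (C u) ≠ 0)
    {s : Finset (PowerSeries F)}
    (hs : ∀ b ∈ s, (f.map coeToPowerSeries.ringHom).IsRoot b ∧ PowerSeries.constantCoeff b = u) :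
    s.card ≤ degT f := by
  have hprod : ∏ b ∈ s, (PowerSeries.C u - b) ∣ ((f.eval (C u) : F[X]) : PowerSeries F) := by
    have := (f.map coeToPowerSeries.ringHom).prod_sub_dvd_eval (fun b hb => (hs b hb).1)
      (coeToPowerSeries.ringHom (C u))
    rw [eval_map_apply] at this
    simpa only [coeToPowerSeries.ringHom_apply, coe_C] using this
  have hX : PowerSeries.X ^ s.card ∣ ∏ b ∈ s, (PowerSeries.C u - b) := by
    rw [← Finset.prod_const]
    refine Finset.prod_dvd_prod_of_dvd _ _ fun b hb => ?_
    simp [PowerSeries.X_dvd_iff, (hs b hb).2]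
  calc s.card = (X ^ s.card : F[X]).natDegree := (natDegree_X_pow _).symm
    _ ≤ (f.eval (C u)).natDegree :=
      natDegree_le_of_dvd (X_pow_dvd_of_X_pow_dvd_coe (hX.trans hprod)) hu
    _ ≤ degT f := natDegree_eval_C_le_degT f u

theorem LaurentSeries.exists_ofPowerSeries_eq_of_order_eq_zero {β : LaurentSeries F} (hβ : β ≠ 0)
    (hord : β.order = 0) :
    ∃ b : PowerSeries F, PowerSeries.constantCoeff b ≠ 0 ∧ HahnSeries.ofPowerSeries ℤ F b = β := by
  refine ⟨β.powerSeriesPart, ?_, ?_⟩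
  · rw [← PowerSeries.coeff_zero_eq_constantCoeff_apply, LaurentSeries.powerSeriesPart_coeff,
      hord, Nat.cast_zero, add_zero, ← hord]
    exact mt HahnSeries.coeff_order_eq_zero.mp hβ
  · simpa [hord] using β.ofPowerSeries_powerSeriesPart

theorem card_roots_constantCoeff_ne_zero_le [Fintype F] {f : F[X][X]}
    (hirr : Irreducible (toRat f)) (hXu : ∀ u : F, u ≠ 0 → ∀ c : F[X], f ≠ C c * (X - C (C u)))
    {s : Finset (PowerSeries F)}
    (hs : ∀ b ∈ s, (f.map coeToPowerSeries.ringHom).IsRoot b ∧ PowerSeries.constantCoeff b ≠ 0) :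
    s.card ≤ (Fintype.card F - 1) * degT f := by
  classical
  calc s.card ≤ degT f * (Finset.univ.erase (0 : F)).card :=
        Finset.card_le_mul_card_image_of_maps_to (f := PowerSeries.constantCoeff)
          (fun b hb => Finset.mem_erase.2 ⟨(hs b hb).2, Finset.mem_univ _⟩) _
          fun u hu => card_roots_constantCoeff_eq_le f
            (eval_C_ne_zero_of_irreducible_toRat hirr (hXu u (Finset.ne_of_mem_erase hu)))
            fun b hb => ⟨(hs b (Finset.filter_subset _ _ hb)).1, (Finset.mem_filter.1 hb).2⟩
    _ = (Fintype.card F - 1) * degT f := by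
        rw [Finset.card_erase_of_mem (Finset.mem_univ _), Finset.card_univ, mul_comm]

theorem setOf_isRoot_order_eq_zero_subset_image (f : F[X][X]) :
    {β : LaurentSeries F | (f.map (algebraMap F[X] (LaurentSeries F))).IsRoot β ∧
        β ≠ 0 ∧ β.order = 0} ⊆
      HahnSeries.ofPowerSeries ℤ F '' {b | (f.map coeToPowerSeries.ringHom).IsRoot b ∧
        PowerSeries.constantCoeff b ≠ 0} := by
  rintro β ⟨hroot, hne, hord⟩
  obtain ⟨b, hb, rfl⟩ := LaurentSeries.exists_ofPowerSeries_eq_of_order_eq_zero hne hord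
  have hmap : f.map (algebraMap F[X] (LaurentSeries F)) =
      (f.map coeToPowerSeries.ringHom).map (HahnSeries.ofPowerSeries ℤ F) := by
    rw [Polynomial.map_map]
    rfl
  rw [hmap, isRoot_map_iff HahnSeries.ofPowerSeries_injective] at hroot
  exact ⟨b, ⟨hroot, hb⟩, rfl⟩

end

theorem card_zero_valuation_roots_le_general {F : Type*} [Field F] [Fintype F]
    (f : Polynomial (Polynomial F))
    (hirr : Irreducible (toRat f))
    (hXu : ∀ u : F, u ≠ 0 → ∀ c : Polynomial F,
      f ≠ Polynomial.C c * (Polynomial.X - Polynomial.C (Polynomial.C u))) :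
    {β : LaurentSeries F |
        (f.map (algebraMap (Polynomial F) (LaurentSeries F))).IsRoot β ∧
          β ≠ 0 ∧ β.order = 0}.ncard ≤ (Fintype.card F - 1) * degT f := by
  have hf : f.map coeToPowerSeries.ringHom ≠ 0 :=
    (Polynomial.map_ne_zero_iff (coe_injective F)).2 fun h => hirr.ne_zero (by simp [toRat, h])
  have hP : {b | (f.map coeToPowerSeries.ringHom).IsRoot b ∧
      PowerSeries.constantCoeff b ≠ 0}.Finite :=
    (finite_setOfPred_isRoot hf).subset fun _ hb => hb.1
  calc _ ≤ (HahnSeries.ofPowerSeries ℤ F '' _).ncard :=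
        Set.ncard_le_ncard (setOf_isRoot_order_eq_zero_subset_image f) (hP.image _)
    _ = hP.toFinset.card := by
        rw [Set.ncard_image_of_injective _ HahnSeries.ofPowerSeries_injective,
          ← Set.ncard_coe_finset, hP.coe_toFinset]
    _ ≤ (Fintype.card F - 1) * degT f :=
        card_roots_constantCoeff_ne_zero_le hirr hXu fun b hb => hP.mem_toFinset.1 hb

/-- The number of distinct roots of valuation zero of a completely split, primitive,
irreducible $f ∈ F_q[T][X]$ (not a constant multiple of $X - u$ for any $u ∈ F_q^×$)
is at most $(q-1)·\deg_T f$. -/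
theorem card_zero_valuation_roots_le {F : Type*} [Field F] [Fintype F]
    (f : Polynomial (Polynomial F)) (hprim : f.IsPrimitive)
    (hirr : Irreducible (toRat f))
    (hXu : ∀ u : F, u ≠ 0 → ∀ c : Polynomial F,
      f ≠ Polynomial.C c * (Polynomial.X - Polynomial.C (Polynomial.C u)))
    (hsplit : SplitsCompletely f) :
    {β : LaurentSeries F |
        (f.map (algebraMap (Polynomial F) (LaurentSeries F))).IsRoot β ∧
          β ≠ 0 ∧ β.order = 0}.ncard ≤ (Fintype.card F - 1) * degT f :=
  card_zero_valuation_roots_le_general f hirr hXu
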